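/- arXiv:1706.05473 — 2 statements merged into one kernel-verified Lean document; each statement's English description precedes it below -/
import Mathlib

section
/- Let n ≥ 2 and let w₁, w₂ be words in the free monoid on {a,b} with w₁ = w₂ in the dihedral Artin monoid DA_n⁺. If w₁ has length ≤ n, then either w₁ and w₂ are the same word, or one of w₁, w₂ equals prod(a,b;n) and the other equals prod(b,a;n). -/
/-! ## Core: words, dihedral Artin monoid and group -/

namespace ArtinSys

/-- The two-letter alphabet `{a, b}`. -/
abbrev Letter : Type := Fin 2

/-- The letter `a`. -/
def la : Letter := 0
/-- The letter `b`. -/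
def lb : Letter := 1

/-- The alternating list `x, y, x, y, …` of length `n`. -/
def altList (x y : Letter) : ℕ → List Letter
  | 0 => []
  | n + 1 => x :: altList y x n

/-- The alternating word `prod(x, y; n) = x y x ⋯` of length `n` in the free monoid. -/
def altWord (x y : Letter) (n : ℕ) : FreeMonoid Letter := FreeMonoid.ofList (altList x y n)

/-- The congruence on the free monoid on `{a,b}` generated by the braid relation
`prod(a,b;n) = prod(b,a;n)`. -/
def braidCon (n : ℕ) : Con (FreeMonoid Letter) :=
  conGen (fun w₁ w₂ => w₁ = altWord la lb n ∧ w₂ = altWord lb la n)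

/-- The dihedral Artin monoid `DA_n⁺`. -/
abbrev DAM (n : ℕ) : Type := (braidCon n).Quotient

/-- The canonical monoid homomorphism from the free monoid to the free group. -/
def toFG : FreeMonoid Letter →* FreeGroup Letter := FreeMonoid.lift FreeGroup.of

/-- The braid relator `prod(a,b;n) · prod(b,a;n)⁻¹` as a singleton set of relators. -/
def braidRels (n : ℕ) : Set (FreeGroup Letter) :=
  {toFG (altWord la lb n) * (toFG (altWord lb la n))⁻¹}

/-- The dihedral Artin group `DA_n = ⟨a, b ∣ prod(a,b;n) = prod(b,a;n)⟩`. -/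
abbrev DA (n : ℕ) : Type := PresentedGroup (braidRels n)

/-- The canonical monoid homomorphism from the free monoid on `{a,b}` to `DA_n`,
sending each generator to itself. -/
def toDA (n : ℕ) : FreeMonoid Letter →* DA n :=
  FreeMonoid.lift (fun s => PresentedGroup.of (rels := braidRels n) s)

theorem braidCon_le_ker (n : ℕ) : braidCon n ≤ Con.ker (toDA n) := by
  apply Con.conGen_le.2
  intro w₁ w₂ hw
  obtain ⟨h1, h2⟩ := hw
  subst h1; subst h2
  show toDA n (altWord la lb n) = toDA n (altWord lb la n)
  have key : ∀ w : FreeMonoid Letter,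
      toDA n w = QuotientGroup.mk (s := Subgroup.normalClosure (braidRels n)) (toFG w) := by
    intro w
    induction w using FreeMonoid.recOn with
    | one => simp [map_one]; rfl
    | of_mul x xs ih =>
        rw [map_mul, map_mul, QuotientGroup.mk_mul, ih]
        congr 1
  rw [key, key]
  have : (QuotientGroup.mk (s := Subgroup.normalClosure (braidRels n))
      (toFG (altWord la lb n) * (toFG (altWord lb la n))⁻¹)) = 1 := by
    rw [QuotientGroup.eq_one_iff]
    exact Subgroup.subset_normalClosure rfl
  rw [QuotientGroup.eq_one_iff] at this
  exact (QuotientGroup.eq_iff_div_mem (N := Subgroup.normalClosure (braidRels n))).2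
    (by simpa [div_eq_mul_inv] using this)

/-- The natural monoid homomorphism `DA_n⁺ →* DA_n` induced by the identity on generators. -/
def DAMtoDA (n : ℕ) : DAM n →* DA n := Con.lift _ (toDA n) (braidCon_le_ker n)

end ArtinSys

namespace ArtinSys

/-! ## The vertices `u_i`, `d_i` of a precell, and the complex `X` for `DA_n` -/

/-- The element of `DA_n` represented by the length-`i` prefix of `prod(x,y;n)`. -/
def uu (n : ℕ) (x y : Letter) (i : ℕ) : DA n := toDA n (altWord x y i)

/-- `u_i`: the vertex of the boundary of the base cell at distance `i` from `l`
along the upper half (reading `prod(a,b;n)`).  In particular `uA n 0 = l = 1` and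
`uA n n = r`. -/
abbrev uA (n i : ℕ) : DA n := uu n la lb i

/-- `d_i`: the vertex of the boundary of the base cell at distance `i` from `l`
along the lower half (reading `prod(b,a;n)`). -/
abbrev uB (n i : ℕ) : DA n := uu n lb la i

/-- Vertices of the complex `X` for `DA_n`:  `Sum.inl g` is the real vertex `g`
(a vertex of `X*`), and `Sum.inr (g, k)` is the interior vertex `c_k` of the cell
`gΠ` (valid for `1 ≤ k ≤ n - 2`). -/
abbrev XV (n : ℕ) : Type := DA n ⊕ DA n × ℕ

/-- Adjacency between two real vertices: either a Cayley edge of `X*`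
(labelled by a generator), or (only when `n = 2`) the added diagonal `l r` of a cell. -/
def rAdj (n : ℕ) (x y : DA n) : Prop :=
  (∃ s : Letter, y = x * PresentedGroup.of (rels := braidRels n) s) ∨
    (n = 2 ∧ y = x * uA n 2)

/-- Adjacency between a real vertex `v` and the interior vertex `c_k` of the cell `gΠ`:
`c_k` is adjacent to `u_k, u_{k+1}, d_k, d_{k+1}`, and moreover to `l` when `k = 1`
and to `r` when `k = n - 2`. -/
def riAdj (n : ℕ) (v g : DA n) (k : ℕ) : Prop :=
  1 ≤ k ∧ k + 2 ≤ n ∧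
    (v = g * uA n k ∨ v = g * uA n (k + 1) ∨ v = g * uB n k ∨ v = g * uB n (k + 1) ∨
      (k = 1 ∧ v = g) ∨ (k + 2 = n ∧ v = g * uA n n))

/-- The zigzag edges between interior vertices of the cells `gΠ` and `g·u_i⁻¹Π`
(resp. `g·d_i⁻¹Π`): the `DA_n`-equivariant propagation of the base edges
`c_j — u_i⁻¹c_{j+i}` (`1 ≤ j ≤ n-2-i`) and `c_j — u_i⁻¹c_{j+i-1}` (`1 ≤ j ≤ n-1-i`). -/
def zzAdj (n : ℕ) (g h : DA n) (j k : ℕ) : Prop :=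
  ∃ i, 1 ≤ i ∧ i + 2 ≤ n ∧ (h = g * (uA n i)⁻¹ ∨ h = g * (uB n i)⁻¹) ∧
    ((1 ≤ j ∧ j + i + 2 ≤ n ∧ k = j + i) ∨ (1 ≤ j ∧ j + i + 1 ≤ n ∧ k = j + i - 1))

/-- Adjacency between interior vertices `c_j ∈ gΠ` and `c_k ∈ hΠ`: either consecutive
interior vertices of the same cell, or a zigzag edge. -/
def iiAdj (n : ℕ) (g h : DA n) (j k : ℕ) : Prop :=
  1 ≤ j ∧ j + 2 ≤ n ∧ 1 ≤ k ∧ k + 2 ≤ n ∧ ((g = h ∧ k = j + 1) ∨ zzAdj n g h j k)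

/-- Unsymmetrized adjacency relation of the `1`-skeleton of `X`. -/
def preAdj (n : ℕ) : XV n → XV n → Prop
  | Sum.inl x, Sum.inl y => rAdj n x y
  | Sum.inl v, Sum.inr p => riAdj n v p.1 p.2
  | Sum.inr _, Sum.inl _ => False
  | Sum.inr p, Sum.inr q => iiAdj n p.1 q.1 p.2 q.2

/-- The `1`-skeleton `X⁽¹⁾` of the complex `X` for `DA_n` (the complex `X` itself is
the flag completion of this graph, so it is entirely determined by this graph). -/
def Xgraph (n : ℕ) : SimpleGraph (XV n) where
  Adj x y := x ≠ y ∧ (preAdj n x y ∨ preAdj n y x)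
  symm := ⟨fun x y h => ⟨h.1.symm, h.2.symm⟩⟩
  loopless := ⟨fun x h => h.1 rfl⟩

/-! ## Model graphs, prisms, 6-largeness, links -/

/-- `W` and `W'` span a prism in `G`: they are disjoint, each spans a complete subgraph,
they have the same cardinality, and `W` can be ordered `w_1, …, w_m` so that the sets
`W'_i` of vertices of `W'` adjacent to `w_i` form a strictly decreasing chain
`W'_1 ⊋ W'_2 ⊋ ⋯ ⊋ W'_m`. -/
def SpanPrism {V : Type*} (G : SimpleGraph V) (W W' : Set V) : Prop :=
  Disjoint W W' ∧ G.IsClique W ∧ G.IsClique W' ∧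
    ∃ (m : ℕ) (w : Fin m → V), Function.Injective w ∧ Set.range w = W ∧
      W'.Finite ∧ W'.ncard = m ∧
      ∀ i j : Fin m, i < j →
        {y | y ∈ W' ∧ G.Adj (w j) y} ⊂ {y | y ∈ W' ∧ G.Adj (w i) y}

/-- The full subgraph of `G` spanned by `S` is a model graph with respect to the
partition `S = {cl} ⊔ {cr} ⊔ Ul ⊔ Ur ⊔ Dl ⊔ Dr`:
(1) the vertices of `S` adjacent to `cl` (resp. `cr`) are exactly `Ul ∪ Dl`
(resp. `Ur ∪ Dr`); (2) there are no edges between `Ul ∪ Ur` and `Dl ∪ Dr`;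
(3) `Ul` and `Ur` span a prism; (4) `Dl` and `Dr` span a prism. -/
def ModelGraphOn {V : Type*} (G : SimpleGraph V) (S : Set V)
    (cl cr : V) (Ul Ur Dl Dr : Set V) : Prop :=
  cl ∈ S ∧ cr ∈ S ∧ cl ≠ cr ∧
    S = {cl} ∪ {cr} ∪ Ul ∪ Ur ∪ Dl ∪ Dr ∧
    cl ∉ Ul ∪ Ur ∪ Dl ∪ Dr ∧ cr ∉ Ul ∪ Ur ∪ Dl ∪ Dr ∧
    Disjoint Ul Ur ∧ Disjoint Ul Dl ∧ Disjoint Ul Dr ∧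
    Disjoint Ur Dl ∧ Disjoint Ur Dr ∧ Disjoint Dl Dr ∧
    {v | v ∈ S ∧ G.Adj cl v} = Ul ∪ Dl ∧
    {v | v ∈ S ∧ G.Adj cr v} = Ur ∪ Dr ∧
    (∀ x ∈ Ul ∪ Ur, ∀ y ∈ Dl ∪ Dr, ¬ G.Adj x y) ∧
    SpanPrism G Ul Ur ∧ SpanPrism G Dl Dr

/-- The full subgraph of `G` spanned by `S` contains an induced (full) simple cycle
of length `m`: an injective map `ZMod m → S` such that two image vertices are adjacent
iff they are consecutive. -/
def IsInducedCycleOn {V : Type*} (G : SimpleGraph V) (S : Set V) (m : ℕ) : Prop :=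
  ∃ f : ZMod m → V, (∀ i, f i ∈ S) ∧ Function.Injective f ∧
    ∀ i j : ZMod m, G.Adj (f i) (f j) ↔ (j = i + 1 ∨ i = j + 1)

/-- The full subgraph of `G` spanned by `S` is `6`-large: it contains no full (induced)
simple cycle of length `4` or `5`. -/
def SixLargeOn {V : Type*} (G : SimpleGraph V) (S : Set V) : Prop :=
  ¬ IsInducedCycleOn G S 4 ∧ ¬ IsInducedCycleOn G S 5

/-- The edge-path distance between `x` and `y` within the full subgraph of `G`
spanned by `S` (the length of a shortest walk from `x` to `y` all of whose vertices
lie in `S`). -/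
noncomputable def distOn {V : Type*} (G : SimpleGraph V) (S : Set V) (x y : V) : ℕ :=
  sInf {k | ∃ p : G.Walk x y, (∀ u ∈ p.support, u ∈ S) ∧ p.length = k}

lemma altWord_length (x y : Letter) (n : ℕ) : (altWord x y n).length = n := by
  show (altList x y n).length = n
  induction n generalizing x y with
  | zero => rfl
  | succ m ih => simp [altList, ih]

/-- Invariant relation: words are equal, or both are long (length ≥ n, equal lengths),
and if the length is exactly `n` they are the pair of alternating words, or equal. -/
def invRel (n : ℕ) (u v : FreeMonoid Letter) : Prop :=
  u = v ∨ (u.length = v.length ∧ n ≤ u.length ∧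
    (u.length = n → ((u = altWord la lb n ∧ v = altWord lb la n) ∨
                     (u = altWord lb la n ∧ v = altWord la lb n) ∨ u = v)))

lemma invRel_symm {n : ℕ} {u v : FreeMonoid Letter} (h : invRel n u v) : invRel n v u := by
  rcases h with h | ⟨hl, hn, hp⟩
  · exact Or.inl h.symm
  · refine Or.inr ⟨hl.symm, hl ▸ hn, fun he => ?_⟩
    rcases hp (hl.trans he) with ⟨h1, h2⟩ | ⟨h1, h2⟩ | h1
    · exact Or.inr (Or.inl ⟨h2, h1⟩)
    · exact Or.inl ⟨h2, h1⟩
    · exact Or.inr (Or.inr h1.symm)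

lemma invRel_trans {n : ℕ} {u v w : FreeMonoid Letter}
    (h1 : invRel n u v) (h2 : invRel n v w) : invRel n u w := by
  rcases h1 with h1 | ⟨hl1, hn1, hp1⟩
  · exact h1 ▸ h2
  rcases h2 with h2 | ⟨hl2, hn2, hp2⟩
  · exact Or.inr ⟨h2 ▸ hl1, hn1, h2 ▸ hp1⟩
  refine Or.inr ⟨hl1.trans hl2, hn1, fun he => ?_⟩
  rcases hp1 he with ⟨ha1, ha2⟩ | ⟨ha1, ha2⟩ | ha <;>
    rcases hp2 (hl1 ▸ he) with ⟨hb1, hb2⟩ | ⟨hb1, hb2⟩ | hb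
  · exact Or.inl ⟨ha1, hb2⟩
  · exact Or.inr (Or.inr (ha1.trans hb2.symm))
  · exact Or.inl ⟨ha1, hb ▸ ha2⟩
  · exact Or.inr (Or.inr (ha1.trans hb2.symm))
  · exact Or.inr (Or.inl ⟨ha1, hb2⟩)
  · exact Or.inr (Or.inl ⟨ha1, hb ▸ ha2⟩)
  · exact Or.inl ⟨ha ▸ hb1, hb2⟩
  · exact Or.inr (Or.inl ⟨ha ▸ hb1, hb2⟩)
  · exact Or.inr (Or.inr (ha.trans hb))

/-- `invRel n` as a congruence. -/
def invCon (n : ℕ) : Con (FreeMonoid Letter) where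
  r := invRel n
  iseqv := ⟨fun _ => Or.inl rfl, invRel_symm, invRel_trans⟩
  mul' := by
    intro u v u' v' h h'
    rcases h with h | ⟨hl, hn, hp⟩
    · rcases h' with h' | ⟨hl', hn', hp'⟩
      · exact Or.inl (by rw [h, h'])
      · refine Or.inr ⟨by simp [FreeMonoid.length_mul, h, hl'], ?_, fun he => ?_⟩
        · simp only [FreeMonoid.length_mul]; omega
        · have hmul := FreeMonoid.length_mul u u'
          have hu1 : u = 1 := FreeMonoid.length_eq_zero.mp (by omega)
          have hv1 : v = 1 := h ▸ hu1
          rw [hu1, hv1, one_mul, one_mul]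
          exact hp' (by omega)
    · rcases h' with h' | ⟨hl', hn', hp'⟩
      · refine Or.inr ⟨by simp [FreeMonoid.length_mul, hl, h'], ?_, fun he => ?_⟩
        · simp only [FreeMonoid.length_mul]; omega
        · have hmul := FreeMonoid.length_mul u u'
          have hu1 : u' = 1 := FreeMonoid.length_eq_zero.mp (by omega)
          have hv1 : v' = 1 := h' ▸ hu1
          rw [hu1, hv1, mul_one, mul_one]
          exact hp (by omega)
      · refine Or.inr ⟨by simp [FreeMonoid.length_mul, hl, hl'], ?_, fun he => ?_⟩
        · simp only [FreeMonoid.length_mul]; omega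
        · have hmul := FreeMonoid.length_mul u u'
          have hu1 : u = 1 := FreeMonoid.length_eq_zero.mp (by omega)
          have hu'1 : u' = 1 := FreeMonoid.length_eq_zero.mp (by omega)
          have hv1 : v = 1 := FreeMonoid.length_eq_zero.mp (by omega)
          have hv'1 : v' = 1 := FreeMonoid.length_eq_zero.mp (by omega)
          exact Or.inr (Or.inr (by rw [hu1, hu'1, hv1, hv'1]))

lemma braidCon_le_invCon (n : ℕ) : braidCon n ≤ invCon n := by
  apply Con.conGen_le.2
  rintro w₁ w₂ ⟨rfl, rfl⟩
  exact Or.inr ⟨by rw [altWord_length, altWord_length],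
    le_of_eq (altWord_length _ _ _).symm, fun _ => Or.inl ⟨rfl, rfl⟩⟩

/-- Let `n ≥ 2` and let `w₁, w₂` be words in the free monoid on `{a,b}`
with `w₁ = w₂` in `DA_n⁺`.  If `w₁` has length `≤ n`, then either `w₁` and `w₂` are the
same word, or one of them equals `prod(a,b;n)` and the other equals `prod(b,a;n)`. -/
theorem dihedral_monoid_short_words (n : ℕ) (hn : 2 ≤ n) (w₁ w₂ : FreeMonoid Letter)
    (h : (braidCon n).mk' w₁ = (braidCon n).mk' w₂) (hlen : w₁.length ≤ n) :
    w₁ = w₂ ∨ (w₁ = altWord la lb n ∧ w₂ = altWord lb la n) ∨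
      (w₁ = altWord lb la n ∧ w₂ = altWord la lb n) := by
  have hcon : braidCon n w₁ w₂ := ((braidCon n).eq).mp h
  have hr := braidCon_le_invCon n hcon
  rcases hr with heq | ⟨hl, hnle, hp⟩
  · exact Or.inl heq
  · have : w₁.length = n := le_antisymm hlen hnle
    rcases hp this with ⟨h1, h2⟩ | ⟨h1, h2⟩ | h1
    · exact Or.inr (Or.inl ⟨h1, h2⟩)
    · exact Or.inr (Or.inr ⟨h1, h2⟩)
    · exact Or.inl h1

end ArtinSys
end

section
/- Every model graph is 6-large, i.e., it contains no full (induced) simple cycle of length 4 or 5. -/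
namespace ArtinSys

section Aux

variable {V : Type*} {G : SimpleGraph V}

lemma prism_cmp {W W' : Set V} (h : SpanPrism G W W') :
    ∀ a ∈ W, ∀ b ∈ W,
      {y | y ∈ W' ∧ G.Adj a y} ⊆ {y | y ∈ W' ∧ G.Adj b y} ∨
      {y | y ∈ W' ∧ G.Adj b y} ⊆ {y | y ∈ W' ∧ G.Adj a y} := by
  obtain ⟨-, -, -, m, w, -, hrange, -, -, hnest⟩ := h
  intro a ha b hb
  rw [← hrange] at ha hb
  obtain ⟨i, rfl⟩ := ha
  obtain ⟨j, rfl⟩ := hb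
  rcases lt_trichotomy i j with hij | rfl | hij
  · exact Or.inr (hnest i j hij).subset
  · exact Or.inl subset_rfl
  · exact Or.inl (hnest j i hij).subset

/-- A 4-cycle inside the union of two cliques with nested cross-neighborhoods
is impossible. -/
lemma two_cliques_four {A B : Set V}
    (hA : G.IsClique A) (hB : G.IsClique B)
    (cmp : ∀ a ∈ A, ∀ b ∈ A,
      {y | y ∈ B ∧ G.Adj a y} ⊆ {y | y ∈ B ∧ G.Adj b y} ∨
      {y | y ∈ B ∧ G.Adj b y} ⊆ {y | y ∈ B ∧ G.Adj a y})
    {f : ZMod 4 → V} (hinj : Function.Injective f)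
    (hadj : ∀ i j : ZMod 4, G.Adj (f i) (f j) ↔ (j = i + 1 ∨ i = j + 1))
    (h0 : f 0 ∈ A ∨ f 0 ∈ B) (h1 : f 1 ∈ A ∨ f 1 ∈ B)
    (h2 : f 2 ∈ A ∨ f 2 ∈ B) (h3 : f 3 ∈ A ∨ f 3 ∈ B) : False := by
  have contra : ∀ a ∈ A, ∀ b ∈ A, ∀ c ∈ B, ∀ d ∈ B,
      G.Adj a c → G.Adj b d → ¬G.Adj a d → ¬G.Adj b c → False := by
    intro a ha b hb c hc d hd hac hbd had hbc
    rcases cmp a ha b hb with hs | hs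
    · exact hbc (hs ⟨hc, hac⟩).2
    · exact had (hs ⟨hd, hbd⟩).2
  have e01 : G.Adj (f 0) (f 1) := (hadj 0 1).mpr (by decide)
  have e12 : G.Adj (f 1) (f 2) := (hadj 1 2).mpr (by decide)
  have e23 : G.Adj (f 2) (f 3) := (hadj 2 3).mpr (by decide)
  have e30 : G.Adj (f 3) (f 0) := (hadj 3 0).mpr (by decide)
  have n02 : ¬ G.Adj (f 0) (f 2) := fun h =>
    (by decide : ¬((2 : ZMod 4) = 0 + 1 ∨ (0 : ZMod 4) = 2 + 1)) ((hadj 0 2).mp h)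
  have n13 : ¬ G.Adj (f 1) (f 3) := fun h =>
    (by decide : ¬((3 : ZMod 4) = 1 + 1 ∨ (1 : ZMod 4) = 3 + 1)) ((hadj 1 3).mp h)
  have ne02 : f 0 ≠ f 2 := hinj.ne (by decide)
  have ne13 : f 1 ≠ f 3 := hinj.ne (by decide)
  rcases h0 with h0 | h0 <;> rcases h2 with h2 | h2 <;>
    rcases h1 with h1 | h1 <;> rcases h3 with h3 | h3 <;>
    first
    | exact n02 (hA h0 h2 ne02)
    | exact n02 (hB h0 h2 ne02)
    | exact n13 (hA h1 h3 ne13)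
    | exact n13 (hB h1 h3 ne13)
    | exact contra _ h0 _ h1 _ h3 _ h2 e30.symm e12 n02 n13
    | exact contra _ h0 _ h3 _ h1 _ h2 e01 e23.symm n02 (fun h => n13 h.symm)
    | exact contra _ h1 _ h2 _ h0 _ h3 e01.symm e23 n13 (fun h => n02 h.symm)
    | exact contra _ h2 _ h3 _ h1 _ h0 e12.symm e30 (fun h => n02 h.symm) (fun h => n13 h.symm)

/-- A 5-cycle inside the union of two cliques is impossible. -/
lemma two_cliques_five {A B : Set V}
    (hA : G.IsClique A) (hB : G.IsClique B)
    {f : ZMod 5 → V} (hinj : Function.Injective f)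
    (hadj : ∀ i j : ZMod 5, G.Adj (f i) (f j) ↔ (j = i + 1 ∨ i = j + 1))
    (h0 : f 0 ∈ A ∨ f 0 ∈ B) (h1 : f 1 ∈ A ∨ f 1 ∈ B)
    (h2 : f 2 ∈ A ∨ f 2 ∈ B) (h3 : f 3 ∈ A ∨ f 3 ∈ B)
    (h4 : f 4 ∈ A ∨ f 4 ∈ B) : False := by
  have d1 : ∀ k : ZMod 5, k ≠ k + 2 := by decide
  have d2 : ∀ k : ZMod 5, ¬(k + 2 = k + 1 ∨ k = k + 2 + 1) := by decide
  have pairA : ∀ i j : ZMod 5, j = i + 2 → f i ∈ A → f j ∈ A → False := by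
    intro i j hj hi2 hj2
    subst hj
    exact d2 i ((hadj _ _).mp (hA hi2 hj2 (hinj.ne (d1 i))))
  have pairB : ∀ i j : ZMod 5, j = i + 2 → f i ∈ B → f j ∈ B → False := by
    intro i j hj hi2 hj2
    subst hj
    exact d2 i ((hadj _ _).mp (hB hi2 hj2 (hinj.ne (d1 i))))
  have a02 := pairA 0 2 (by decide); have a13 := pairA 1 3 (by decide)
  have a24 := pairA 2 4 (by decide); have a30 := pairA 3 0 (by decide)
  have a41 := pairA 4 1 (by decide)
  have b02 := pairB 0 2 (by decide); have b13 := pairB 1 3 (by decide)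
  have b24 := pairB 2 4 (by decide); have b30 := pairB 3 0 (by decide)
  have b41 := pairB 4 1 (by decide)
  rcases h0 with h0 | h0 <;> rcases h1 with h1 | h1 <;> rcases h2 with h2 | h2 <;>
    rcases h3 with h3 | h3 <;> rcases h4 with h4 | h4 <;>
    first
    | exact a02 h0 h2 | exact a13 h1 h3 | exact a24 h2 h4
    | exact a30 h3 h0 | exact a41 h4 h1
    | exact b02 h0 h2 | exact b13 h1 h3 | exact b24 h2 h4
    | exact b30 h3 h0 | exact b41 h4 h1

/-- A 4-cycle through a "center" vertex `c` (with the other center `c'` absent) is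
impossible. -/
lemma center_four {c c' : V} {A B A' B' : Set V}
    (hadjc : ∀ v, G.Adj c v ↔ v ∈ A ∪ B)
    (hpart : ∀ v, v ≠ c → v ≠ c' → v ∉ A ∪ B → v ∈ A' ∪ B')
    (hA : G.IsClique A) (hB : G.IsClique B)
    (hUD : ∀ x ∈ A ∪ A', ∀ y ∈ B ∪ B', ¬ G.Adj x y)
    {f : ZMod 4 → V} (hinj : Function.Injective f)
    (hadj : ∀ i j : ZMod 4, G.Adj (f i) (f j) ↔ (j = i + 1 ∨ i = j + 1))
    {i : ZMod 4} (hc : f i = c) (hc' : ∀ k, f k ≠ c') : False := by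
  have dec3 : ∀ k : ZMod 4, k + 3 = k + 1 ∨ k = k + 3 + 1 := by decide
  have dec2 : ∀ k : ZMod 4, ¬(k + 2 = k + 1 ∨ k = k + 2 + 1) := by decide
  have dec13 : ∀ k : ZMod 4, ¬(k + 3 = k + 1 + 1 ∨ k + 1 = k + 3 + 1) := by decide
  have decne2 : ∀ k : ZMod 4, k ≠ k + 2 := by decide
  have decne13 : ∀ k : ZMod 4, k + 1 ≠ k + 3 := by decide
  have e1 : G.Adj c (f (i+1)) := by
    rw [← hc]; exact (hadj i (i+1)).mpr (Or.inl rfl)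
  have e3 : G.Adj c (f (i+3)) := by
    rw [← hc]; exact (hadj i (i+3)).mpr (dec3 i)
  have m1 : f (i+1) ∈ A ∪ B := (hadjc _).mp e1
  have m3 : f (i+3) ∈ A ∪ B := (hadjc _).mp e3
  have n2 : ¬ G.Adj c (f (i+2)) := by
    rw [← hc, hadj]; exact dec2 i
  have m2 : f (i+2) ∈ A' ∪ B' := by
    refine hpart _ (fun h => decne2 i (hinj (hc.symm ▸ h ▸ rfl))) (hc' _)
      (fun hmem => n2 ((hadjc _).mpr hmem))
  have e12 : G.Adj (f (i+1)) (f (i+2)) := (hadj _ _).mpr (Or.inl (by ring))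
  have e23 : G.Adj (f (i+2)) (f (i+3)) := (hadj _ _).mpr (Or.inl (by ring))
  have n13 : ¬ G.Adj (f (i+1)) (f (i+3)) := by rw [hadj]; exact dec13 i
  have ne13 : f (i+1) ≠ f (i+3) := hinj.ne (decne13 i)
  rcases (Set.mem_union _ _ _).mp m1 with h1 | h1 <;> rcases (Set.mem_union _ _ _).mp m2 with h2 | h2
  · rcases (Set.mem_union _ _ _).mp m3 with h3 | h3
    · exact n13 (hA h1 h3 ne13)
    · exact hUD _ (Set.mem_union_right _ h2) _ (Set.mem_union_left _ h3) e23
  · exact hUD _ (Set.mem_union_left _ h1) _ (Set.mem_union_right _ h2) e12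
  · exact hUD _ (Set.mem_union_right _ h2) _ (Set.mem_union_left _ h1) e12.symm
  · rcases (Set.mem_union _ _ _).mp m3 with h3 | h3
    · exact hUD _ (Set.mem_union_left _ h3) _ (Set.mem_union_right _ h2) e23.symm
    · exact n13 (hB h1 h3 ne13)

/-- A 5-cycle through a "center" vertex `c` (with the other center `c'` absent) is
impossible. -/
lemma center_five {c c' : V} {A B A' B' : Set V}
    (hadjc : ∀ v, G.Adj c v ↔ v ∈ A ∪ B)
    (hpart : ∀ v, v ≠ c → v ≠ c' → v ∉ A ∪ B → v ∈ A' ∪ B')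
    (hA : G.IsClique A) (hB : G.IsClique B)
    (hUD : ∀ x ∈ A ∪ A', ∀ y ∈ B ∪ B', ¬ G.Adj x y)
    {f : ZMod 5 → V} (hinj : Function.Injective f)
    (hadj : ∀ i j : ZMod 5, G.Adj (f i) (f j) ↔ (j = i + 1 ∨ i = j + 1))
    {i : ZMod 5} (hc : f i = c) (hc' : ∀ k, f k ≠ c') : False := by
  have dec4 : ∀ k : ZMod 5, k + 4 = k + 1 ∨ k = k + 4 + 1 := by decide
  have dec2 : ∀ k : ZMod 5, ¬(k + 2 = k + 1 ∨ k = k + 2 + 1) := by decide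
  have dec3 : ∀ k : ZMod 5, ¬(k + 3 = k + 1 ∨ k = k + 3 + 1) := by decide
  have dec14 : ∀ k : ZMod 5, ¬(k + 4 = k + 1 + 1 ∨ k + 1 = k + 4 + 1) := by decide
  have decne2 : ∀ k : ZMod 5, k ≠ k + 2 := by decide
  have decne3 : ∀ k : ZMod 5, k ≠ k + 3 := by decide
  have decne14 : ∀ k : ZMod 5, k + 1 ≠ k + 4 := by decide
  have e1 : G.Adj c (f (i+1)) := by
    rw [← hc]; exact (hadj i (i+1)).mpr (Or.inl rfl)
  have e4 : G.Adj c (f (i+4)) := by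
    rw [← hc]; exact (hadj i (i+4)).mpr (dec4 i)
  have m1 : f (i+1) ∈ A ∪ B := (hadjc _).mp e1
  have m4 : f (i+4) ∈ A ∪ B := (hadjc _).mp e4
  have n2 : ¬ G.Adj c (f (i+2)) := by rw [← hc, hadj]; exact dec2 i
  have n3 : ¬ G.Adj c (f (i+3)) := by rw [← hc, hadj]; exact dec3 i
  have m2 : f (i+2) ∈ A' ∪ B' :=
    hpart _ (fun h => decne2 i (hinj (hc.symm ▸ h ▸ rfl))) (hc' _)
      (fun hmem => n2 ((hadjc _).mpr hmem))
  have m3 : f (i+3) ∈ A' ∪ B' :=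
    hpart _ (fun h => decne3 i (hinj (hc.symm ▸ h ▸ rfl))) (hc' _)
      (fun hmem => n3 ((hadjc _).mpr hmem))
  have e12 : G.Adj (f (i+1)) (f (i+2)) := (hadj _ _).mpr (Or.inl (by ring))
  have e23 : G.Adj (f (i+2)) (f (i+3)) := (hadj _ _).mpr (Or.inl (by ring))
  have e34 : G.Adj (f (i+3)) (f (i+4)) := (hadj _ _).mpr (Or.inl (by ring))
  have n14 : ¬ G.Adj (f (i+1)) (f (i+4)) := by rw [hadj]; exact dec14 i
  have ne14 : f (i+1) ≠ f (i+4) := hinj.ne (decne14 i)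
  rcases (Set.mem_union _ _ _).mp m1 with h1 | h1
  · have h2 : f (i+2) ∈ A' := by
      rcases (Set.mem_union _ _ _).mp m2 with h | h
      · exact h
      · exact absurd e12 (hUD _ (Set.mem_union_left _ h1) _ (Set.mem_union_right _ h))
    have h3 : f (i+3) ∈ A' := by
      rcases (Set.mem_union _ _ _).mp m3 with h | h
      · exact h
      · exact absurd e23 (hUD _ (Set.mem_union_right _ h2) _ (Set.mem_union_right _ h))
    have h4 : f (i+4) ∈ A := by
      rcases (Set.mem_union _ _ _).mp m4 with h | h
      · exact h
      · exact absurd e34 (hUD _ (Set.mem_union_right _ h3) _ (Set.mem_union_left _ h))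
    exact n14 (hA h1 h4 ne14)
  · have h2 : f (i+2) ∈ B' := by
      rcases (Set.mem_union _ _ _).mp m2 with h | h
      · exact absurd e12.symm (hUD _ (Set.mem_union_right _ h) _ (Set.mem_union_left _ h1))
      · exact h
    have h3 : f (i+3) ∈ B' := by
      rcases (Set.mem_union _ _ _).mp m3 with h | h
      · exact absurd e23.symm (hUD _ (Set.mem_union_right _ h) _ (Set.mem_union_right _ h2))
      · exact h
    have h4 : f (i+4) ∈ B := by
      rcases (Set.mem_union _ _ _).mp m4 with h | h
      · exact absurd e34.symm (hUD _ (Set.mem_union_left _ h) _ (Set.mem_union_right _ h3))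
      · exact h
    exact n14 (hB h1 h4 ne14)

end Aux

/-- Every model graph is `6`-large, i.e. it contains no full (induced)
simple cycle of length `4` or `5`. -/
theorem model_graph_six_large {V : Type*} [Finite V] (G : SimpleGraph V)
    (h : ∃ (cl cr : V) (Ul Ur Dl Dr : Set V),
      ModelGraphOn G Set.univ cl cr Ul Ur Dl Dr) :
    SixLargeOn G Set.univ := by
  obtain ⟨cl, cr, Ul, Ur, Dl, Dr, hM⟩ := h
  obtain ⟨-, -, hclcr, hpart, hclni, hcrni, dUlUr, dUlDl, dUlDr, dUrDl, dUrDr, dDlDr,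
    hNl, hNr, hnoUD, hpU, hpD⟩ := hM
  have hadjl : ∀ v, G.Adj cl v ↔ v ∈ Ul ∪ Dl := by
    intro v
    have hv := Set.ext_iff.mp hNl v
    simp only [Set.mem_setOf_eq, Set.mem_univ, true_and] at hv
    exact hv
  have hadjr : ∀ v, G.Adj cr v ↔ v ∈ Ur ∪ Dr := by
    intro v
    have hv := Set.ext_iff.mp hNr v
    simp only [Set.mem_setOf_eq, Set.mem_univ, true_and] at hv
    exact hv
  have hpartv : ∀ v : V, v = cl ∨ v = cr ∨ v ∈ Ul ∨ v ∈ Ur ∨ v ∈ Dl ∨ v ∈ Dr := by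
    intro v
    have hv : v ∈ ({cl} : Set V) ∪ {cr} ∪ Ul ∪ Ur ∪ Dl ∪ Dr := hpart ▸ Set.mem_univ v
    simp only [Set.mem_union, Set.mem_singleton_iff] at hv
    tauto
  rw [Set.mem_union, Set.mem_union, Set.mem_union] at hcrni
  push_neg at hcrni
  obtain ⟨⟨⟨hcrUl, hcrUr⟩, hcrDl⟩, hcrDr⟩ := hcrni
  have hncc : ¬ G.Adj cl cr := fun hadjcc => by
    rcases (Set.mem_union _ _ _).mp ((hadjl cr).mp hadjcc) with h' | h'
    exacts [hcrUl h', hcrDl h']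
  have key : ∀ v, v ∈ Ul ∪ Dl → v ∈ Ur ∪ Dr → False := by
    intro v h1 h2
    rw [Set.mem_union] at h1 h2
    rcases h1 with h1 | h1 <;> rcases h2 with h2 | h2
    exacts [Set.disjoint_left.mp dUlUr h1 h2, Set.disjoint_left.mp dUlDr h1 h2,
      Set.disjoint_left.mp dUrDl h2 h1, Set.disjoint_left.mp dDlDr h1 h2]
  have hpartl : ∀ v, v ≠ cl → v ≠ cr → v ∉ Ul ∪ Dl → v ∈ Ur ∪ Dr := by
    intro v h1 h2 h3
    rw [Set.mem_union] at h3 ⊢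
    have := hpartv v
    tauto
  have hpartr : ∀ v, v ≠ cr → v ≠ cl → v ∉ Ur ∪ Dr → v ∈ Ul ∪ Dl := by
    intro v h1 h2 h3
    rw [Set.mem_union] at h3 ⊢
    have := hpartv v
    tauto
  have hUlc := hpU.2.1
  have hUrc := hpU.2.2.1
  have hDlc := hpD.2.1
  have hDrc := hpD.2.2.1
  have cmpU := prism_cmp hpU
  have cmpD := prism_cmp hpD
  have hnoUD' : ∀ x ∈ Ur ∪ Ul, ∀ y ∈ Dr ∪ Dl, ¬ G.Adj x y := by
    intro x hx y hy
    rw [Set.mem_union] at hx hy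
    exact hnoUD x ((Set.mem_union _ _ _).mpr hx.symm) y ((Set.mem_union _ _ _).mpr hy.symm)
  have stepU : ∀ x y, x ∈ Ul ∪ Ur → y ∈ (Ul ∪ Ur) ∪ (Dl ∪ Dr) → G.Adj x y →
      y ∈ Ul ∪ Ur := by
    intro x y hx hy hxy
    rcases (Set.mem_union _ _ _).mp hy with h | h
    · exact h
    · exact absurd hxy (hnoUD x hx y h)
  have stepD : ∀ x y, x ∈ Dl ∪ Dr → y ∈ (Ul ∪ Ur) ∪ (Dl ∪ Dr) → G.Adj x y →
      y ∈ Dl ∪ Dr := by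
    intro x y hx hy hxy
    rcases (Set.mem_union _ _ _).mp hy with h | h
    · exact absurd hxy.symm (hnoUD y h x hx)
    · exact h
  constructor
  · rintro ⟨f, -, hinj, hadj⟩
    by_cases hcl : ∃ i, f i = cl
    · obtain ⟨i, hi⟩ := hcl
      by_cases hcr : ∃ j, f j = cr
      · obtain ⟨j, hj⟩ := hcr
        have hne : i ≠ j := fun hh => hclcr (by rw [← hi, hh, hj])
        have hnadj : ¬ G.Adj (f i) (f j) := by rw [hi, hj]; exact hncc
        rw [hadj] at hnadj
        push_neg at hnadj
        have hj2 : j = i + 2 :=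
          (by decide : ∀ i j : ZMod 4, i ≠ j → j ≠ i + 1 → i ≠ j + 1 → j = i + 2)
            i j hne hnadj.1 hnadj.2
        have e1 : G.Adj (f i) (f (i+1)) := (hadj _ _).mpr (Or.inl rfl)
        have e2 : G.Adj (f j) (f (i+1)) := (hadj _ _).mpr (Or.inr (by rw [hj2]; ring))
        exact key _ ((hadjl _).mp (hi ▸ e1)) ((hadjr _).mp (hj ▸ e2))
      · push_neg at hcr
        exact center_four hadjl hpartl hUlc hDlc hnoUD hinj hadj hi hcr
    · push_neg at hcl
      by_cases hcr : ∃ j, f j = cr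
      · obtain ⟨j, hj⟩ := hcr
        exact center_four hadjr hpartr hUrc hDrc hnoUD' hinj hadj hj hcl
      · push_neg at hcr
        have hmem : ∀ k, f k ∈ (Ul ∪ Ur) ∪ (Dl ∪ Dr) := by
          intro k
          rcases hpartv (f k) with h | h | h | h | h | h
          · exact absurd h (hcl k)
          · exact absurd h (hcr k)
          · exact Set.mem_union_left _ (Set.mem_union_left _ h)
          · exact Set.mem_union_left _ (Set.mem_union_right _ h)
          · exact Set.mem_union_right _ (Set.mem_union_left _ h)
          · exact Set.mem_union_right _ (Set.mem_union_right _ h)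
        have e01 : G.Adj (f 0) (f 1) := (hadj 0 1).mpr (by decide)
        have e12 : G.Adj (f 1) (f 2) := (hadj 1 2).mpr (by decide)
        have e23 : G.Adj (f 2) (f 3) := (hadj 2 3).mpr (by decide)
        rcases (Set.mem_union _ _ _).mp (hmem 0) with h0 | h0
        · have h1 := stepU _ _ h0 (hmem 1) e01
          have h2 := stepU _ _ h1 (hmem 2) e12
          have h3 := stepU _ _ h2 (hmem 3) e23
          exact two_cliques_four hUlc hUrc cmpU hinj hadj
            ((Set.mem_union _ _ _).mp h0) ((Set.mem_union _ _ _).mp h1)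
            ((Set.mem_union _ _ _).mp h2) ((Set.mem_union _ _ _).mp h3)
        · have h1 := stepD _ _ h0 (hmem 1) e01
          have h2 := stepD _ _ h1 (hmem 2) e12
          have h3 := stepD _ _ h2 (hmem 3) e23
          exact two_cliques_four hDlc hDrc cmpD hinj hadj
            ((Set.mem_union _ _ _).mp h0) ((Set.mem_union _ _ _).mp h1)
            ((Set.mem_union _ _ _).mp h2) ((Set.mem_union _ _ _).mp h3)
  · rintro ⟨f, -, hinj, hadj⟩
    by_cases hcl : ∃ i, f i = cl
    · obtain ⟨i, hi⟩ := hcl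
      by_cases hcr : ∃ j, f j = cr
      · obtain ⟨j, hj⟩ := hcr
        have hne : i ≠ j := fun hh => hclcr (by rw [← hi, hh, hj])
        have hnadj : ¬ G.Adj (f i) (f j) := by rw [hi, hj]; exact hncc
        rw [hadj] at hnadj
        push_neg at hnadj
        have hj2 : j = i + 2 ∨ i = j + 2 :=
          (by decide : ∀ i j : ZMod 5, i ≠ j → j ≠ i + 1 → i ≠ j + 1 →
            (j = i + 2 ∨ i = j + 2)) i j hne hnadj.1 hnadj.2
        rcases hj2 with hj2 | hi2
        · have e1 : G.Adj (f i) (f (i+1)) := (hadj _ _).mpr (Or.inl rfl)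
          have e2 : G.Adj (f j) (f (i+1)) := (hadj _ _).mpr (Or.inr (by rw [hj2]; ring))
          exact key _ ((hadjl _).mp (hi ▸ e1)) ((hadjr _).mp (hj ▸ e2))
        · have e1 : G.Adj (f j) (f (j+1)) := (hadj _ _).mpr (Or.inl rfl)
          have e2 : G.Adj (f i) (f (j+1)) := (hadj _ _).mpr (Or.inr (by rw [hi2]; ring))
          exact key _ ((hadjl _).mp (hi ▸ e2)) ((hadjr _).mp (hj ▸ e1))
      · push_neg at hcr
        exact center_five hadjl hpartl hUlc hDlc hnoUD hinj hadj hi hcr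
    · push_neg at hcl
      by_cases hcr : ∃ j, f j = cr
      · obtain ⟨j, hj⟩ := hcr
        exact center_five hadjr hpartr hUrc hDrc hnoUD' hinj hadj hj hcl
      · push_neg at hcr
        have hmem : ∀ k, f k ∈ (Ul ∪ Ur) ∪ (Dl ∪ Dr) := by
          intro k
          rcases hpartv (f k) with h | h | h | h | h | h
          · exact absurd h (hcl k)
          · exact absurd h (hcr k)
          · exact Set.mem_union_left _ (Set.mem_union_left _ h)
          · exact Set.mem_union_left _ (Set.mem_union_right _ h)
          · exact Set.mem_union_right _ (Set.mem_union_left _ h)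
          · exact Set.mem_union_right _ (Set.mem_union_right _ h)
        have e01 : G.Adj (f 0) (f 1) := (hadj 0 1).mpr (by decide)
        have e12 : G.Adj (f 1) (f 2) := (hadj 1 2).mpr (by decide)
        have e23 : G.Adj (f 2) (f 3) := (hadj 2 3).mpr (by decide)
        have e34 : G.Adj (f 3) (f 4) := (hadj 3 4).mpr (by decide)
        rcases (Set.mem_union _ _ _).mp (hmem 0) with h0 | h0
        · have h1 := stepU _ _ h0 (hmem 1) e01
          have h2 := stepU _ _ h1 (hmem 2) e12
          have h3 := stepU _ _ h2 (hmem 3) e23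
          have h4 := stepU _ _ h3 (hmem 4) e34
          exact two_cliques_five hUlc hUrc hinj hadj
            ((Set.mem_union _ _ _).mp h0) ((Set.mem_union _ _ _).mp h1)
            ((Set.mem_union _ _ _).mp h2) ((Set.mem_union _ _ _).mp h3)
            ((Set.mem_union _ _ _).mp h4)
        · have h1 := stepD _ _ h0 (hmem 1) e01
          have h2 := stepD _ _ h1 (hmem 2) e12
          have h3 := stepD _ _ h2 (hmem 3) e23
          have h4 := stepD _ _ h3 (hmem 4) e34
          exact two_cliques_five hDlc hDrc hinj hadj
            ((Set.mem_union _ _ _).mp h0) ((Set.mem_union _ _ _).mp h1)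
            ((Set.mem_union _ _ _).mp h2) ((Set.mem_union _ _ _).mp h3)
            ((Set.mem_union _ _ _).mp h4)

end ArtinSys
end
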